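/- Let K be a fuzzy knowledge base under Łukasiewicz semantics, A an atomic concept, C a concept, and α ∈ [0,1] a rational number. Let t be a one-variable Łukasiewicz term whose induced function f_t : [0,1] → [0,1] satisfies f_t(x) ≤ 1 − α for all x and f_t(α) = 1 − α, and let A' be an atomic concept distinct from A and occurring neither in K nor in C. Write τ(A') for the concept obtained from t by substituting A' for the variable v. Then K ∪ {⟨A ⊑ C ≥ α⟩} is satisfiable iff K ∪ {⟨A ⊑ C ⊔ τ(A') ≥ 1⟩} is satisfiable; moreover the same equivalence holds for satisfiability in witnessed interpretations and for satisfiability in interpretations with finite domain. -/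
import Mathlib


/-- ALC concepts over countably many atomic concepts and role names. -/
inductive MConcept : Type where
  | atom : ℕ → MConcept
  | top  : MConcept
  | bot  : MConcept
  | conj : MConcept → MConcept → MConcept
  | disj : MConcept → MConcept → MConcept
  | neg  : MConcept → MConcept
  | all  : ℕ → MConcept → MConcept
  | ex   : ℕ → MConcept → MConcept
deriving DecidableEq

/-- Łukasiewicz t-norm. -/
def lukT (x y : ℝ) : ℝ := max (x + y - 1) 0
/-- Łukasiewicz t-conorm. -/
def lukS (x y : ℝ) : ℝ := min (x + y) 1
/-- Łukasiewicz implication. -/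
def lukImp (x y : ℝ) : ℝ := min (1 - x + y) 1

/-- A fuzzy interpretation. -/
structure Interp : Type 1 where
  Δ : Type
  nonempty : Nonempty Δ
  atom : ℕ → Δ → ℝ
  role : ℕ → Δ → Δ → ℝ
  ind : ℕ → Δ
  atom_mem : ∀ i x, atom i x ∈ Set.Icc (0:ℝ) 1
  role_mem : ∀ j x y, role j x y ∈ Set.Icc (0:ℝ) 1

/-- Value of a concept at a point under Łukasiewicz semantics. -/
noncomputable def lval (I : Interp) : MConcept → I.Δ → ℝ
  | MConcept.atom i, x => I.atom i x
  | MConcept.top, _ => 1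
  | MConcept.bot, _ => 0
  | MConcept.conj C D, x => lukT (lval I C x) (lval I D x)
  | MConcept.disj C D, x => lukS (lval I C x) (lval I D x)
  | MConcept.neg C, x => 1 - lval I C x
  | MConcept.all j C, x => ⨅ y, lukImp (I.role j x y) (lval I C y)
  | MConcept.ex j C, x => ⨆ y, lukT (I.role j x y) (lval I C y)

/-- Degree of subsumption `(C ⊑ D)^I`. -/
noncomputable def lsub (I : Interp) (C D : MConcept) : ℝ :=
  ⨅ x, lukImp (lval I C x) (lval I D x)

/-- Axioms of fuzzy knowledge bases. -/
inductive KAxiom : Type where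
  | assertGE : ℕ → MConcept → ℚ → KAxiom   -- ⟨a : C ≥ α⟩
  | assertLE : ℕ → MConcept → ℚ → KAxiom   -- ⟨a : C ≤ α⟩
  | roleGE : ℕ → ℕ → ℕ → ℚ → KAxiom        -- ⟨(a,b) : R ≥ α⟩
  | gci : MConcept → MConcept → ℚ → KAxiom -- ⟨C ⊑ D ≥ α⟩
deriving DecidableEq

/-- The rational constant of an axiom lies in `[0,1]`. -/
def axBounded : KAxiom → Prop
  | KAxiom.assertGE _ _ q => 0 ≤ q ∧ q ≤ 1
  | KAxiom.assertLE _ _ q => 0 ≤ q ∧ q ≤ 1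
  | KAxiom.roleGE _ _ _ q => 0 ≤ q ∧ q ≤ 1
  | KAxiom.gci _ _ q => 0 ≤ q ∧ q ≤ 1

/-- Satisfaction of an axiom in an interpretation. -/
def lsat (I : Interp) : KAxiom → Prop
  | KAxiom.assertGE a C q => (q : ℝ) ≤ lval I C (I.ind a)
  | KAxiom.assertLE a C q => lval I C (I.ind a) ≤ (q : ℝ)
  | KAxiom.roleGE a b j q => (q : ℝ) ≤ I.role j (I.ind a) (I.ind b)
  | KAxiom.gci C D q => (q : ℝ) ≤ lsub I C D

/-- Satisfaction of a set of axioms. -/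
def lsatKB (I : Interp) (K : Finset KAxiom) : Prop := ∀ ax ∈ K, lsat I ax

/-- Witnessed interpretation: all the relevant infima and suprema are attained. -/
def lWitnessed (I : Interp) : Prop :=
  ∀ (C D : MConcept) (j : ℕ) (x : I.Δ),
    (∃ y, lval I (MConcept.ex j C) x = lukT (I.role j x y) (lval I C y)) ∧
    (∃ y, lval I (MConcept.all j C) x = lukImp (I.role j x y) (lval I C y)) ∧
    (∃ y, lsub I C D = lukImp (lval I C y) (lval I D y))

/-- The atomic concept `A_i` occurs in a concept. -/
def occursC (i : ℕ) : MConcept → Prop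
  | MConcept.atom i' => i = i'
  | MConcept.top => False
  | MConcept.bot => False
  | MConcept.conj C D => occursC i C ∨ occursC i D
  | MConcept.disj C D => occursC i C ∨ occursC i D
  | MConcept.neg C => occursC i C
  | MConcept.all _ C => occursC i C
  | MConcept.ex _ C => occursC i C

/-- The atomic concept `A_i` occurs in an axiom. -/
def occursA (i : ℕ) : KAxiom → Prop
  | KAxiom.assertGE _ C _ => occursC i C
  | KAxiom.assertLE _ C _ => occursC i C
  | KAxiom.roleGE _ _ _ _ => False
  | KAxiom.gci C D _ => occursC i C ∨ occursC i D

/-- One-variable Łukasiewicz terms. -/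
inductive LTerm : Type where
  | v : LTerm
  | conj : LTerm → LTerm → LTerm
  | disj : LTerm → LTerm → LTerm
  | neg : LTerm → LTerm

/-- The function `f_t : [0,1] → [0,1]` induced by a one-variable Łukasiewicz term. -/
def LTerm.eval : LTerm → ℝ → ℝ
  | LTerm.v, x => x
  | LTerm.conj s t, x => max (LTerm.eval s x + LTerm.eval t x - 1) 0
  | LTerm.disj s t, x => min (LTerm.eval s x + LTerm.eval t x) 1
  | LTerm.neg t, x => 1 - LTerm.eval t x

/-- The concept `τ(A_{i'})` obtained from a one-variable Łukasiewicz term by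
substituting the atomic concept `A_{i'}` for the variable. -/
def LTerm.toConcept (i' : ℕ) : LTerm → MConcept
  | LTerm.v => MConcept.atom i'
  | LTerm.conj s t => MConcept.conj (LTerm.toConcept i' s) (LTerm.toConcept i' t)
  | LTerm.disj s t => MConcept.disj (LTerm.toConcept i' s) (LTerm.toConcept i' t)
  | LTerm.neg t => MConcept.neg (LTerm.toConcept i' t)

section Helpers

open Filter

lemma unit_lukT {a b : ℝ} (ha : a ∈ Set.Icc (0:ℝ) 1) (hb : b ∈ Set.Icc (0:ℝ) 1) :
    lukT a b ∈ Set.Icc (0:ℝ) 1 := by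
  obtain ⟨ha0, ha1⟩ := ha; obtain ⟨hb0, hb1⟩ := hb
  exact ⟨le_max_right _ _, max_le (by linarith) (by norm_num)⟩

lemma unit_lukS {a b : ℝ} (ha : a ∈ Set.Icc (0:ℝ) 1) (hb : b ∈ Set.Icc (0:ℝ) 1) :
    lukS a b ∈ Set.Icc (0:ℝ) 1 := by
  obtain ⟨ha0, ha1⟩ := ha; obtain ⟨hb0, hb1⟩ := hb
  exact ⟨le_min (by linarith) (by norm_num), min_le_right _ _⟩

lemma unit_lukImp {a b : ℝ} (ha : a ∈ Set.Icc (0:ℝ) 1) (hb : b ∈ Set.Icc (0:ℝ) 1) :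
    lukImp a b ∈ Set.Icc (0:ℝ) 1 := by
  obtain ⟨ha0, ha1⟩ := ha; obtain ⟨hb0, hb1⟩ := hb
  exact ⟨le_min (by linarith) (by norm_num), min_le_right _ _⟩

lemma unit_neg {a : ℝ} (ha : a ∈ Set.Icc (0:ℝ) 1) : 1 - a ∈ Set.Icc (0:ℝ) 1 := by
  obtain ⟨ha0, ha1⟩ := ha
  exact ⟨by linarith, by linarith⟩

lemma bddBelow_unit {ι : Sort*} {f : ι → ℝ} (h : ∀ y, f y ∈ Set.Icc (0:ℝ) 1) :
    BddBelow (Set.range f) := ⟨0, by rintro _ ⟨y, rfl⟩; exact (h y).1⟩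

lemma bddAbove_unit {ι : Sort*} {f : ι → ℝ} (h : ∀ y, f y ∈ Set.Icc (0:ℝ) 1) :
    BddAbove (Set.range f) := ⟨1, by rintro _ ⟨y, rfl⟩; exact (h y).2⟩

lemma iInf_mem_unit {ι : Sort*} [Nonempty ι] {f : ι → ℝ} (h : ∀ y, f y ∈ Set.Icc (0:ℝ) 1) :
    (⨅ y, f y) ∈ Set.Icc (0:ℝ) 1 :=
  ⟨le_ciInf fun y => (h y).1,
   ciInf_le_of_le (bddBelow_unit h) (Classical.arbitrary ι) (h _).2⟩

lemma iSup_mem_unit {ι : Sort*} [Nonempty ι] {f : ι → ℝ} (h : ∀ y, f y ∈ Set.Icc (0:ℝ) 1) :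
    (⨆ y, f y) ∈ Set.Icc (0:ℝ) 1 :=
  ⟨le_ciSup_of_le (bddAbove_unit h) (Classical.arbitrary ι) (h _).1,
   ciSup_le fun y => (h y).2⟩

lemma lval_mem (I : Interp) (D : MConcept) : ∀ x, lval I D x ∈ Set.Icc (0:ℝ) 1 := by
  haveI := I.nonempty
  induction D with
  | atom k => exact I.atom_mem k
  | top => intro x; simp only [lval]; constructor <;> norm_num
  | bot => intro x; simp only [lval]; constructor <;> norm_num
  | conj C D ihC ihD => intro x; simp only [lval]; exact unit_lukT (ihC x) (ihD x)
  | disj C D ihC ihD => intro x; simp only [lval]; exact unit_lukS (ihC x) (ihD x)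
  | neg C ih => intro x; simp only [lval]; exact unit_neg (ih x)
  | all j C ih =>
      intro x; simp only [lval]
      exact iInf_mem_unit fun y => unit_lukImp (I.role_mem j x y) (ih y)
  | ex j C ih =>
      intro x; simp only [lval]
      exact iSup_mem_unit fun y => unit_lukT (I.role_mem j x y) (ih y)

lemma lsub_le_point (I : Interp) (C D : MConcept) (x : I.Δ) :
    lsub I C D ≤ lukImp (lval I C x) (lval I D x) :=
  ciInf_le (bddBelow_unit fun y => unit_lukImp (lval_mem I C y) (lval_mem I D y)) x

lemma LTerm.eval_mem (t : LTerm) {x : ℝ} (hx : x ∈ Set.Icc (0:ℝ) 1) :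
    t.eval x ∈ Set.Icc (0:ℝ) 1 := by
  induction t with
  | v => exact hx
  | conj s t ihs iht => simp only [LTerm.eval]; exact unit_lukT ihs iht
  | disj s t ihs iht => simp only [LTerm.eval]; exact unit_lukS ihs iht
  | neg t ih => simp only [LTerm.eval]; exact unit_neg ih

lemma lval_toConcept (I : Interp) (i' : ℕ) (t : LTerm) (x : I.Δ) :
    lval I (LTerm.toConcept i' t) x = LTerm.eval t (I.atom i' x) := by
  induction t with
  | v => simp only [LTerm.toConcept, LTerm.eval, lval]
  | conj s t ihs iht => simp only [LTerm.toConcept, LTerm.eval, lval, lukT, ihs, iht]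
  | disj s t ihs iht => simp only [LTerm.toConcept, LTerm.eval, lval, lukS, ihs, iht]
  | neg t ih => simp only [LTerm.toConcept, LTerm.eval, lval, ih]

end Helpers
section ModAtom

/-- Modify an interpretation by giving atom `i'` the constant value `c`. -/
def modAtom (I : Interp) (i' : ℕ) (c : ℝ) (hc : c ∈ Set.Icc (0:ℝ) 1) : Interp where
  Δ := I.Δ
  nonempty := I.nonempty
  atom k := if k = i' then fun _ => c else I.atom k
  role := I.role
  ind := I.ind
  atom_mem := by
    intro k x
    split
    · exact hc
    · exact I.atom_mem k x
  role_mem := I.role_mem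

lemma lval_modAtom (I : Interp) (i' : ℕ) (c : ℝ) (hc : c ∈ Set.Icc (0:ℝ) 1) :
    ∀ (D : MConcept), ¬ occursC i' D → ∀ x : I.Δ, lval (modAtom I i' c hc) D x = lval I D x := by
  intro D
  induction D with
  | atom k =>
      intro hD x
      simp only [occursC] at hD
      show (if k = i' then (fun _ : I.Δ => c) else I.atom k) x = I.atom k x
      rw [if_neg (fun h : k = i' => hD h.symm)]
  | top => intro _ x; rfl
  | bot => intro _ x; rfl
  | conj C D ihC ihD =>
      intro hD x
      simp only [occursC] at hD
      push_neg at hD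
      simp only [lval, ihC hD.1 x, ihD hD.2 x]
  | disj C D ihC ihD =>
      intro hD x
      simp only [occursC] at hD
      push_neg at hD
      simp only [lval, ihC hD.1 x, ihD hD.2 x]
  | neg C ih =>
      intro hD x
      simp only [occursC] at hD
      simp only [lval, ih hD x]
  | all j C ih =>
      intro hD x
      simp only [occursC] at hD
      simp only [lval]
      exact iInf_congr fun y => by rw [ih hD y]; rfl
  | ex j C ih =>
      intro hD x
      simp only [occursC] at hD
      simp only [lval]
      exact iSup_congr fun y => by rw [ih hD y]; rfl

lemma lsub_modAtom (I : Interp) (i' : ℕ) (c : ℝ) (hc : c ∈ Set.Icc (0:ℝ) 1)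
    (C D : MConcept) (hC : ¬ occursC i' C) (hD : ¬ occursC i' D) :
    lsub (modAtom I i' c hc) C D = lsub I C D := by
  unfold lsub
  exact iInf_congr fun x => by
    rw [lval_modAtom I i' c hc C hC x, lval_modAtom I i' c hc D hD x]

lemma lsat_modAtom (I : Interp) (i' : ℕ) (c : ℝ) (hc : c ∈ Set.Icc (0:ℝ) 1)
    (ax : KAxiom) (hax : ¬ occursA i' ax) (h : lsat I ax) : lsat (modAtom I i' c hc) ax := by
  cases ax with
  | assertGE a Cc r =>
      simp only [occursA] at hax
      show (r:ℝ) ≤ lval (modAtom I i' c hc) Cc (I.ind a)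
      rw [lval_modAtom I i' c hc Cc hax]
      exact h
  | assertLE a Cc r =>
      simp only [occursA] at hax
      show lval (modAtom I i' c hc) Cc (I.ind a) ≤ (r:ℝ)
      rw [lval_modAtom I i' c hc Cc hax]
      exact h
  | roleGE a b j r => exact h
  | gci Cc Dd r =>
      simp only [occursA] at hax
      push_neg at hax
      show (r:ℝ) ≤ lsub (modAtom I i' c hc) Cc Dd
      rw [lsub_modAtom I i' c hc Cc Dd hax.1 hax.2]
      exact h

end ModAtom
section Ulim

open Filter

/-- A fixed nonprincipal ultrafilter on `ℕ`. -/
noncomputable def UF : Ultrafilter ℕ := Ultrafilter.of Filter.cofinite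

lemma UF_le_atTop : (UF : Filter ℕ) ≤ Filter.atTop := by
  rw [← Nat.cofinite_eq_atTop]
  exact Ultrafilter.of_le _

open scoped Classical in
/-- Limit along the ultrafilter `UF`. -/
noncomputable def ulim (f : ℕ → ℝ) : ℝ :=
  if h : ∃ a, Filter.Tendsto f (UF : Filter ℕ) (nhds a) then h.choose else 0

lemma ulim_eq {f : ℕ → ℝ} {a : ℝ} (h : Filter.Tendsto f (UF : Filter ℕ) (nhds a)) :
    ulim f = a := by
  have hex : ∃ a, Filter.Tendsto f (UF : Filter ℕ) (nhds a) := ⟨a, h⟩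
  rw [ulim, dif_pos hex]
  exact tendsto_nhds_unique hex.choose_spec h

attribute [irreducible] ulim UF

lemma exists_ulim {f : ℕ → ℝ} (hf : ∀ n, f n ∈ Set.Icc (0:ℝ) 1) :
    ∃ a ∈ Set.Icc (0:ℝ) 1, Filter.Tendsto f (UF : Filter ℕ) (nhds a) := by
  obtain ⟨a, ha, hle⟩ := (isCompact_Icc (a := (0:ℝ)) (b := 1)).ultrafilter_le_nhds
    (Ultrafilter.map f UF) (by
      rw [Ultrafilter.coe_map]
      exact Filter.le_principal_iff.mpr (Filter.mem_map.mpr (Filter.univ_mem' hf)))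
  refine ⟨a, ha, ?_⟩
  rwa [Ultrafilter.coe_map] at hle

lemma tendsto_ulim {f : ℕ → ℝ} (hf : ∀ n, f n ∈ Set.Icc (0:ℝ) 1) :
    Filter.Tendsto f (UF : Filter ℕ) (nhds (ulim f)) := by
  obtain ⟨a, _, h⟩ := exists_ulim hf
  rw [ulim_eq h]; exact h

lemma ulim_mem {f : ℕ → ℝ} (hf : ∀ n, f n ∈ Set.Icc (0:ℝ) 1) :
    ulim f ∈ Set.Icc (0:ℝ) 1 := by
  obtain ⟨a, ha, h⟩ := exists_ulim hf
  rw [ulim_eq h]; exact ha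

lemma ulim_const (c : ℝ) : ulim (fun _ => c) = c := ulim_eq tendsto_const_nhds

lemma ulim_le_ulim {f g : ℕ → ℝ} (hf : ∀ n, f n ∈ Set.Icc (0:ℝ) 1)
    (hg : ∀ n, g n ∈ Set.Icc (0:ℝ) 1) (h : ∀ n, f n ≤ g n) : ulim f ≤ ulim g :=
  le_of_tendsto_of_tendsto' (tendsto_ulim hf) (tendsto_ulim hg) h

lemma ulim_lukT {f g : ℕ → ℝ} (hf : ∀ n, f n ∈ Set.Icc (0:ℝ) 1)
    (hg : ∀ n, g n ∈ Set.Icc (0:ℝ) 1) :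
    ulim (fun n => lukT (f n) (g n)) = lukT (ulim f) (ulim g) := by
  apply ulim_eq
  unfold lukT
  exact (((tendsto_ulim hf).add (tendsto_ulim hg)).sub tendsto_const_nhds).max tendsto_const_nhds

lemma ulim_lukS {f g : ℕ → ℝ} (hf : ∀ n, f n ∈ Set.Icc (0:ℝ) 1)
    (hg : ∀ n, g n ∈ Set.Icc (0:ℝ) 1) :
    ulim (fun n => lukS (f n) (g n)) = lukS (ulim f) (ulim g) := by
  apply ulim_eq
  unfold lukS
  exact ((tendsto_ulim hf).add (tendsto_ulim hg)).min tendsto_const_nhds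

lemma ulim_lukImp {f g : ℕ → ℝ} (hf : ∀ n, f n ∈ Set.Icc (0:ℝ) 1)
    (hg : ∀ n, g n ∈ Set.Icc (0:ℝ) 1) :
    ulim (fun n => lukImp (f n) (g n)) = lukImp (ulim f) (ulim g) := by
  apply ulim_eq
  unfold lukImp
  exact ((tendsto_const_nhds.sub (tendsto_ulim hf)).add (tendsto_ulim hg)).min tendsto_const_nhds

lemma ulim_onesub {f : ℕ → ℝ} (hf : ∀ n, f n ∈ Set.Icc (0:ℝ) 1) :
    ulim (fun n => 1 - f n) = 1 - ulim f := by
  apply ulim_eq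
  exact tendsto_const_nhds.sub (tendsto_ulim hf)

lemma UF_tendsto_one_div :
    Filter.Tendsto (fun n : ℕ => 1 / ((n : ℝ) + 1)) (UF : Filter ℕ) (nhds 0) :=
  tendsto_one_div_add_atTop_nhds_zero_nat.mono_left UF_le_atTop

lemma ulim_iInf {ι : Type} [Nonempty ι] (G : ℕ → ι → ℝ)
    (hG : ∀ n z, G n z ∈ Set.Icc (0:ℝ) 1) :
    (∃ h₀ : ℕ → ι, ulim (fun n => G n (h₀ n)) = ulim (fun n => ⨅ z, G n z)) ∧
    (⨅ h' : ℕ → ι, ulim (fun n => G n (h' n))) = ulim (fun n => ⨅ z, G n z) := by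
  set L : ℕ → ℝ := fun n => ⨅ z, G n z with hLdef
  have hL : ∀ n, L n ∈ Set.Icc (0:ℝ) 1 := fun n => iInf_mem_unit (hG n)
  have hge : ∀ h' : ℕ → ι, ulim L ≤ ulim (fun n => G n (h' n)) := fun h' =>
    ulim_le_ulim hL (fun n => hG n _) (fun n => ciInf_le (bddBelow_unit (hG n)) (h' n))
  have hch : ∀ n : ℕ, ∃ z, G n z < L n + 1 / ((n : ℝ) + 1) := by
    intro n
    apply exists_lt_of_ciInf_lt
    have h1 : (0:ℝ) < 1 / ((n : ℝ) + 1) := by positivity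
    show L n < L n + 1 / ((n : ℝ) + 1)
    linarith
  choose h₀ hh₀ using hch
  have hle : ulim (fun n => G n (h₀ n)) ≤ ulim L := by
    have t2 : Filter.Tendsto (fun n : ℕ => L n + 1 / ((n : ℝ) + 1)) (UF : Filter ℕ)
        (nhds (ulim L + 0)) := (tendsto_ulim hL).add UF_tendsto_one_div
    have hcomp := le_of_tendsto_of_tendsto'
      (tendsto_ulim (fun n => hG n (h₀ n))) t2 (fun n => (hh₀ n).le)
    linarith
  have heq : ulim (fun n => G n (h₀ n)) = ulim L := le_antisymm hle (hge h₀)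
  refine ⟨⟨h₀, heq⟩, le_antisymm ?_ (le_ciInf hge)⟩
  calc (⨅ h' : ℕ → ι, ulim (fun n => G n (h' n))) ≤ ulim (fun n => G n (h₀ n)) :=
        ciInf_le (bddBelow_unit (fun h' => ulim_mem (fun n => hG n (h' n)))) h₀
    _ = ulim L := heq

lemma ulim_iSup {ι : Type} [Nonempty ι] (G : ℕ → ι → ℝ)
    (hG : ∀ n z, G n z ∈ Set.Icc (0:ℝ) 1) :
    (∃ h₀ : ℕ → ι, ulim (fun n => G n (h₀ n)) = ulim (fun n => ⨆ z, G n z)) ∧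
    (⨆ h' : ℕ → ι, ulim (fun n => G n (h' n))) = ulim (fun n => ⨆ z, G n z) := by
  set L : ℕ → ℝ := fun n => ⨆ z, G n z with hLdef
  have hL : ∀ n, L n ∈ Set.Icc (0:ℝ) 1 := fun n => iSup_mem_unit (hG n)
  have hge : ∀ h' : ℕ → ι, ulim (fun n => G n (h' n)) ≤ ulim L := fun h' =>
    ulim_le_ulim (fun n => hG n _) hL (fun n => le_ciSup (bddAbove_unit (hG n)) (h' n))
  have hch : ∀ n : ℕ, ∃ z, L n - 1 / ((n : ℝ) + 1) < G n z := by
    intro n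
    apply exists_lt_of_lt_ciSup
    have h1 : (0:ℝ) < 1 / ((n : ℝ) + 1) := by positivity
    show L n - 1 / ((n : ℝ) + 1) < L n
    linarith
  choose h₀ hh₀ using hch
  have hle : ulim L ≤ ulim (fun n => G n (h₀ n)) := by
    have t2 : Filter.Tendsto (fun n : ℕ => L n - 1 / ((n : ℝ) + 1)) (UF : Filter ℕ)
        (nhds (ulim L - 0)) := (tendsto_ulim hL).sub UF_tendsto_one_div
    have hcomp := le_of_tendsto_of_tendsto'
      t2 (tendsto_ulim (fun n => hG n (h₀ n))) (fun n => (hh₀ n).le)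
    linarith
  have heq : ulim (fun n => G n (h₀ n)) = ulim L := le_antisymm (hge h₀) hle
  refine ⟨⟨h₀, heq⟩, le_antisymm (ciSup_le hge) ?_⟩
  calc ulim L = ulim (fun n => G n (h₀ n)) := heq.symm
    _ ≤ ⨆ h' : ℕ → ι, ulim (fun n => G n (h' n)) :=
        le_ciSup (bddAbove_unit (fun h' => ulim_mem (fun n => hG n (h' n)))) h₀

end Ulim
section Up

/-- "Ultrapower" of an interpretation along `UF`: domain `ℕ → Δ`, values are `UF`-limits. -/
noncomputable def Up (J : Interp) : Interp where
  Δ := ℕ → J.Δ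
  nonempty := ⟨fun _ => Classical.choice J.nonempty⟩
  atom k h := ulim (fun n => J.atom k (h n))
  role j h h' := ulim (fun n => J.role j (h n) (h' n))
  ind a := fun _ => J.ind a
  atom_mem := fun k h => ulim_mem (fun n => J.atom_mem k (h n))
  role_mem := fun j h h' => ulim_mem (fun n => J.role_mem j (h n) (h' n))

lemma lval_Up (J : Interp) (D : MConcept) :
    ∀ h : ℕ → J.Δ, lval (Up J) D h = ulim (fun n => lval J D (h n)) := by
  haveI := J.nonempty
  induction D with
  | atom k => intro h; rfl
  | top => intro h; simp only [lval]; exact (ulim_const 1).symm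
  | bot => intro h; simp only [lval]; exact (ulim_const 0).symm
  | conj C D ihC ihD =>
      intro h
      simp only [lval, ihC, ihD]
      exact (ulim_lukT (fun n => lval_mem J C (h n)) (fun n => lval_mem J D (h n))).symm
  | disj C D ihC ihD =>
      intro h
      simp only [lval, ihC, ihD]
      exact (ulim_lukS (fun n => lval_mem J C (h n)) (fun n => lval_mem J D (h n))).symm
  | neg C ih =>
      intro h
      simp only [lval, ih]
      exact (ulim_onesub (fun n => lval_mem J C (h n))).symm
  | all j C ih =>
      intro h
      have key := ulim_iInf (fun n z => lukImp (J.role j (h n) z) (lval J C z))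
        (fun n z => unit_lukImp (J.role_mem j (h n) z) (lval_mem J C z))
      simp only [lval]
      calc (⨅ h' : ℕ → J.Δ, lukImp ((Up J).role j h h') (lval (Up J) C h'))
          = ⨅ h' : ℕ → J.Δ, ulim (fun n => lukImp (J.role j (h n) (h' n)) (lval J C (h' n))) := by
            refine iInf_congr fun h' => ?_
            rw [ih h']
            exact (ulim_lukImp (fun n => J.role_mem j (h n) (h' n))
              (fun n => lval_mem J C (h' n))).symm
        _ = ulim (fun n => ⨅ z, lukImp (J.role j (h n) z) (lval J C z)) := key.2
  | ex j C ih =>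
      intro h
      have key := ulim_iSup (fun n z => lukT (J.role j (h n) z) (lval J C z))
        (fun n z => unit_lukT (J.role_mem j (h n) z) (lval_mem J C z))
      simp only [lval]
      calc (⨆ h' : ℕ → J.Δ, lukT ((Up J).role j h h') (lval (Up J) C h'))
          = ⨆ h' : ℕ → J.Δ, ulim (fun n => lukT (J.role j (h n) (h' n)) (lval J C (h' n))) := by
            refine iSup_congr fun h' => ?_
            rw [ih h']
            exact (ulim_lukT (fun n => J.role_mem j (h n) (h' n))
              (fun n => lval_mem J C (h' n))).symm
        _ = ulim (fun n => ⨆ z, lukT (J.role j (h n) z) (lval J C z)) := key.2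

lemma lsub_Up (J : Interp) (C D : MConcept) :
    lsub (Up J) C D = lsub J C D ∧
    ∃ y : ℕ → J.Δ, lsub (Up J) C D = lukImp (lval (Up J) C y) (lval (Up J) D y) := by
  haveI := J.nonempty
  have hG : ∀ (_ : ℕ) (z : J.Δ), lukImp (lval J C z) (lval J D z) ∈ Set.Icc (0:ℝ) 1 :=
    fun _ z => unit_lukImp (lval_mem J C z) (lval_mem J D z)
  have key := ulim_iInf (fun _ z => lukImp (lval J C z) (lval J D z)) hG
  have e1 : ∀ h : ℕ → J.Δ, lukImp (lval (Up J) C h) (lval (Up J) D h)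
      = ulim (fun n => lukImp (lval J C (h n)) (lval J D (h n))) := by
    intro h
    rw [lval_Up J C h, lval_Up J D h]
    exact (ulim_lukImp (fun n => lval_mem J C (h n)) (fun n => lval_mem J D (h n))).symm
  have e2 : lsub (Up J) C D = ulim (fun _ => ⨅ z, lukImp (lval J C z) (lval J D z)) := by
    show (⨅ h : ℕ → J.Δ, lukImp (lval (Up J) C h) (lval (Up J) D h)) = _
    rw [iInf_congr e1]
    exact key.2
  have e3 : ulim (fun _ => ⨅ z, lukImp (lval J C z) (lval J D z)) = lsub J C D :=
    ulim_const _
  obtain ⟨h₀, hh₀⟩ := key.1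
  refine ⟨e2.trans e3, h₀, ?_⟩
  rw [e2, e1 h₀, hh₀]

lemma lWitnessed_Up (J : Interp) : lWitnessed (Up J) := by
  haveI := J.nonempty
  intro C D j x
  refine ⟨?_, ?_, (lsub_Up J C D).2⟩
  · -- existential witness
    have hG : ∀ n z, lukT (J.role j (x n) z) (lval J C z) ∈ Set.Icc (0:ℝ) 1 :=
      fun n z => unit_lukT (J.role_mem j (x n) z) (lval_mem J C z)
    obtain ⟨h₀, hh₀⟩ := (ulim_iSup _ hG).1
    refine ⟨h₀, ?_⟩
    have e1 : lukT ((Up J).role j x h₀) (lval (Up J) C h₀)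
        = ulim (fun n => lukT (J.role j (x n) (h₀ n)) (lval J C (h₀ n))) := by
      rw [lval_Up J C h₀]
      exact (ulim_lukT (fun n => J.role_mem j (x n) (h₀ n))
        (fun n => lval_mem J C (h₀ n))).symm
    rw [lval_Up J (MConcept.ex j C) x, e1, hh₀]
    simp only [lval]
  · -- universal witness
    have hG : ∀ n z, lukImp (J.role j (x n) z) (lval J C z) ∈ Set.Icc (0:ℝ) 1 :=
      fun n z => unit_lukImp (J.role_mem j (x n) z) (lval_mem J C z)
    obtain ⟨h₀, hh₀⟩ := (ulim_iInf _ hG).1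
    refine ⟨h₀, ?_⟩
    have e1 : lukImp ((Up J).role j x h₀) (lval (Up J) C h₀)
        = ulim (fun n => lukImp (J.role j (x n) (h₀ n)) (lval J C (h₀ n))) := by
      rw [lval_Up J C h₀]
      exact (ulim_lukImp (fun n => J.role_mem j (x n) (h₀ n))
        (fun n => lval_mem J C (h₀ n))).symm
    rw [lval_Up J (MConcept.all j C) x, e1, hh₀]
    simp only [lval]

lemma lsat_Up (J : Interp) (ax : KAxiom) (h : lsat J ax) : lsat (Up J) ax := by
  cases ax with
  | assertGE a Cc r =>
      show (r:ℝ) ≤ lval (Up J) Cc ((Up J).ind a)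
      rw [show (Up J).ind a = (fun _ => J.ind a) from rfl, lval_Up, ulim_const]
      exact h
  | assertLE a Cc r =>
      show lval (Up J) Cc ((Up J).ind a) ≤ (r:ℝ)
      rw [show (Up J).ind a = (fun _ => J.ind a) from rfl, lval_Up, ulim_const]
      exact h
  | roleGE a b j r =>
      show (r:ℝ) ≤ (Up J).role j ((Up J).ind a) ((Up J).ind b)
      show (r:ℝ) ≤ ulim (fun _ => J.role j (J.ind a) (J.ind b))
      rw [ulim_const]
      exact h
  | gci Cc Dd r =>
      show (r:ℝ) ≤ lsub (Up J) Cc Dd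
      rw [(lsub_Up J Cc Dd).1]
      exact h

end Up
section Main

lemma new_to_old (K : Finset KAxiom) (i i' : ℕ) (C : MConcept) (q : ℚ) (hq1 : q ≤ 1)
    (t : LTerm) (ht1 : ∀ x ∈ Set.Icc (0:ℝ) 1, LTerm.eval t x ≤ 1 - (q : ℝ))
    (J : Interp)
    (hJ : lsatKB J (insert (KAxiom.gci (MConcept.atom i)
      (MConcept.disj C (LTerm.toConcept i' t)) 1) K)) :
    lsatKB J (insert (KAxiom.gci (MConcept.atom i) C q) K) := by
  haveI := J.nonempty
  intro ax hax
  rcases Finset.mem_insert.mp hax with rfl | haxK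
  · show (q:ℝ) ≤ lsub J (MConcept.atom i) C
    have hnew : ((1:ℚ):ℝ) ≤ lsub J (MConcept.atom i)
        (MConcept.disj C (LTerm.toConcept i' t)) := hJ _ (Finset.mem_insert_self _ _)
    unfold lsub
    refine le_ciInf fun x => ?_
    have hpt := le_trans hnew (lsub_le_point J _ _ x)
    have ha := J.atom_mem i x
    have hτm := LTerm.eval_mem t (J.atom_mem i' x)
    have hτle := ht1 (J.atom i' x) (J.atom_mem i' x)
    simp only [lval, lukImp, lukS, lval_toConcept, Rat.cast_one] at hpt ⊢
    rw [le_min_iff] at hpt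
    obtain ⟨hpt1, _⟩ := hpt
    refine le_min ?_ (by exact_mod_cast hq1)
    rcases le_total (lval J C x + LTerm.eval t (J.atom i' x)) 1 with hmin | hmin
    · rw [min_eq_left hmin] at hpt1
      linarith
    · rw [min_eq_right hmin] at hpt1
      obtain ⟨ha0, ha1⟩ := ha
      obtain ⟨hτ0, hτ1⟩ := hτm
      linarith
  · exact hJ ax (Finset.mem_insert_of_mem haxK)

lemma old_to_new (K : Finset KAxiom) (i i' : ℕ) (C : MConcept) (q : ℚ)
    (t : LTerm) (ht2 : LTerm.eval t (q : ℝ) = 1 - (q : ℝ))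
    (hii' : i' ≠ i) (hK : ∀ ax ∈ K, ¬ occursA i' ax) (hC : ¬ occursC i' C)
    (hc : (q:ℝ) ∈ Set.Icc (0:ℝ) 1)
    (I : Interp)
    (hI : lsatKB I (insert (KAxiom.gci (MConcept.atom i) C q) K)) :
    lsatKB (modAtom I i' (q:ℝ) hc)
      (insert (KAxiom.gci (MConcept.atom i)
        (MConcept.disj C (LTerm.toConcept i' t)) 1) K) := by
  haveI := I.nonempty
  haveI : Nonempty (modAtom I i' (q:ℝ) hc).Δ := I.nonempty
  intro ax hax
  rcases Finset.mem_insert.mp hax with rfl | haxK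
  · show ((1:ℚ):ℝ) ≤ lsub (modAtom I i' (q:ℝ) hc) (MConcept.atom i)
      (MConcept.disj C (LTerm.toConcept i' t))
    rw [Rat.cast_one]
    unfold lsub
    refine le_ciInf fun x => ?_
    have hold : (q:ℝ) ≤ lsub I (MConcept.atom i) C := hI _ (Finset.mem_insert_self _ _)
    have hpt := le_trans hold (lsub_le_point I (MConcept.atom i) C x)
    simp only [lval, lukImp] at hpt
    have hq' : (q:ℝ) ≤ 1 - I.atom i x + lval I C x := (le_min_iff.mp hpt).1
    have ha := I.atom_mem i x
    have e1 : (modAtom I i' (q:ℝ) hc).atom i x = I.atom i x := by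
      show (if i = i' then (fun _ : I.Δ => (q:ℝ)) else I.atom i) x = I.atom i x
      rw [if_neg (fun h : i = i' => hii' h.symm)]
    have e2 : lval (modAtom I i' (q:ℝ) hc) (LTerm.toConcept i' t) x = 1 - (q:ℝ) := by
      rw [lval_toConcept]
      show LTerm.eval t ((if i' = i' then (fun _ : I.Δ => (q:ℝ)) else I.atom i') x) = _
      rw [if_pos rfl]
      exact ht2
    have e3 : lval (modAtom I i' (q:ℝ) hc) C x = lval I C x :=
      lval_modAtom I i' (q:ℝ) hc C hC x
    simp only [lval, lukImp, lukS, e1, e2, e3]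
    obtain ⟨ha0, ha1⟩ := ha
    refine le_min ?_ le_rfl
    rcases le_total (lval I C x + (1 - (q:ℝ))) 1 with hmin | hmin
    · rw [min_eq_left hmin]
      linarith
    · rw [min_eq_right hmin]
      linarith
  · exact lsat_modAtom I i' (q:ℝ) hc ax (hK ax haxK) (hI ax (Finset.mem_insert_of_mem haxK))

end Main
theorem stmt13 (K : Finset KAxiom) (hKb : ∀ ax ∈ K, axBounded ax)
    (i i' : ℕ) (C : MConcept) (q : ℚ) (hq0 : 0 ≤ q) (hq1 : q ≤ 1)
    (t : LTerm)
    (ht1 : ∀ x ∈ Set.Icc (0:ℝ) 1, LTerm.eval t x ≤ 1 - (q : ℝ))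
    (ht2 : LTerm.eval t (q : ℝ) = 1 - (q : ℝ))
    (hii' : i' ≠ i)
    (hK : ∀ ax ∈ K, ¬ occursA i' ax) (hC : ¬ occursC i' C) :
    ((∃ I : Interp, lsatKB I (insert (KAxiom.gci (MConcept.atom i) C q) K)) ↔
     (∃ I : Interp, lsatKB I
        (insert (KAxiom.gci (MConcept.atom i)
          (MConcept.disj C (LTerm.toConcept i' t)) 1) K))) ∧
    ((∃ I : Interp, lWitnessed I ∧
        lsatKB I (insert (KAxiom.gci (MConcept.atom i) C q) K)) ↔
     (∃ I : Interp, lWitnessed I ∧ lsatKB I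
        (insert (KAxiom.gci (MConcept.atom i)
          (MConcept.disj C (LTerm.toConcept i' t)) 1) K))) ∧
    ((∃ I : Interp, Finite I.Δ ∧
        lsatKB I (insert (KAxiom.gci (MConcept.atom i) C q) K)) ↔
     (∃ I : Interp, Finite I.Δ ∧ lsatKB I
        (insert (KAxiom.gci (MConcept.atom i)
          (MConcept.disj C (LTerm.toConcept i' t)) 1) K))) := by
  have hc : (q:ℝ) ∈ Set.Icc (0:ℝ) 1 := ⟨by exact_mod_cast hq0, by exact_mod_cast hq1⟩
  refine ⟨⟨?_, ?_⟩, ⟨?_, ?_⟩, ⟨?_, ?_⟩⟩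
  · rintro ⟨I, hI⟩
    exact ⟨modAtom I i' (q:ℝ) hc, old_to_new K i i' C q t ht2 hii' hK hC hc I hI⟩
  · rintro ⟨J, hJ⟩
    exact ⟨J, new_to_old K i i' C q hq1 t ht1 J hJ⟩
  · rintro ⟨I, _hw, hI⟩
    exact ⟨Up (modAtom I i' (q:ℝ) hc), lWitnessed_Up _,
      fun ax hax => lsat_Up _ ax (old_to_new K i i' C q t ht2 hii' hK hC hc I hI ax hax)⟩
  · rintro ⟨J, hw, hJ⟩
    exact ⟨J, hw, new_to_old K i i' C q hq1 t ht1 J hJ⟩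
  · rintro ⟨I, hfin, hI⟩
    exact ⟨modAtom I i' (q:ℝ) hc, hfin, old_to_new K i i' C q t ht2 hii' hK hC hc I hI⟩
  · rintro ⟨J, hfin, hJ⟩
    exact ⟨J, hfin, new_to_old K i i' C q hq1 t ht1 J hJ⟩
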